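/- arXiv:2501.04536 — 3 statements merged into one kernel-verified Lean document; each statement's English description precedes it below -/
import Mathlib

section
/- Let f : ℝⁿ → ℝ be differentiable with ∇f Lipschitz continuous on ℝⁿ with constant L ∈ (0,∞) and f bounded below. Let {x_k} ⊂ ℝⁿ be a sequence with f(x_{k+1}) ≤ f(x_k) for every k ≥ 0, let g_k = ∇f(x_k), and let {S_k} be a sequence of linear subspaces of ℝⁿ. If dist(g_k, S_k) → 0 and f(x_{k+1}) − inf{f(x) : x ∈ x_k + S_k} → 0 as k → ∞, then ‖g_k‖ → 0 as k → ∞. -/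
/-!
Write `p_k` for the orthogonal projection of `g_k` onto `S_k`. One gradient step of length `1/L`
along `-p_k` stays in `x_k + S_k` and, by the descent lemma, decreases `f` by `‖p_k‖² / (2L)`, so
`‖p_k‖² ≤ 2L (f(x_k) - inf_{x_k + S_k} f)`. The right-hand side is
`(f(x_k) - f(x_{k+1})) + (f(x_{k+1}) - inf_{x_k + S_k} f)`, where the first term tends to `0`
because `f(x_k)` is monotone and bounded below. Hence `‖g_k‖ ≤ ‖p_k‖ + dist(g_k, S_k) → 0`.
-/

open Filter Topology Set

open scoped RealInnerProductSpace

theorem le_add_deriv_add_half_of_deriv_le {φ φ' : ℝ → ℝ} {K : ℝ}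
    (hφ : ∀ t, HasDerivAt φ (φ' t) t) (hφ' : ∀ t ∈ Ico (0 : ℝ) 1, φ' t ≤ φ' 0 + K * t) :
    φ 1 ≤ φ 0 + φ' 0 + K / 2 := by
  have hB (t : ℝ) : HasDerivAt (fun t => φ 0 + φ' 0 * t + K / 2 * t ^ 2) (φ' 0 + K * t) t :=
    ((((hasDerivAt_id' t).const_mul (φ' 0)).const_add (φ 0)).add
      ((hasDerivAt_pow 2 t).const_mul (K / 2))).congr_deriv (by norm_num; ring)
  have := image_le_of_deriv_right_le_deriv_boundary
    (fun t _ => (hφ t).continuousAt.continuousWithinAt) (fun t _ => (hφ t).hasDerivWithinAt)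
    (by simp) (fun t _ => (hB t).continuousAt.continuousWithinAt)
    (fun t _ => (hB t).hasDerivWithinAt) hφ' (right_mem_Icc.2 zero_le_one)
  simpa using this

theorem tendsto_sub_succ_of_antitone {u : ℕ → ℝ} (hu : Antitone u) (hbdd : BddBelow (range u)) :
    Tendsto (fun k => u k - u (k + 1)) atTop (𝓝 0) := by
  have h := tendsto_atTop_ciInf hu hbdd
  simpa using h.sub (h.comp (tendsto_add_atTop_nat 1))

namespace Submodule

variable {E : Type*} [NormedAddCommGroup E] [InnerProductSpace ℝ E]
  (K : Submodule ℝ E) [K.HasOrthogonalProjection]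

theorem norm_sub_starProjection_eq_infDist (y : E) :
    ‖y - K.starProjection y‖ = Metric.infDist y K := by
  rw [starProjection_minimal, Metric.infDist_eq_iInf]
  simp only [dist_eq_norm]
  rfl

theorem real_inner_starProjection_self (y : E) :
    ⟪y, K.starProjection y⟫ = ‖K.starProjection y‖ ^ 2 := by
  rw [← real_inner_self_eq_norm_sq, inner_starProjection_left_eq_right,
    K.starProjection_eq_self_iff.2 (K.starProjection_apply_mem y)]

end Submodule

section Descent

variable {E : Type*} [NormedAddCommGroup E] [InnerProductSpace ℝ E] [CompleteSpace E]
  {f : E → ℝ} {L : ℝ}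

theorem hasDerivAt_image_add_smul (hf : Differentiable ℝ f) (x v : E) (t : ℝ) :
    HasDerivAt (fun t : ℝ => f (x + t • v)) ⟪gradient f (x + t • v), v⟫ t := by
  have hline : HasDerivAt (fun t : ℝ => x + t • v) v t := by
    simpa using ((hasDerivAt_id t).smul_const v).const_add x
  simpa [InnerProductSpace.toDual_apply_apply, Function.comp_def] using
    (hf _).hasGradientAt.hasFDerivAt.comp_hasDerivAt t hline

theorem image_add_le_of_gradient_lipschitz (hf : Differentiable ℝ f)
    (hlip : ∀ y z, ‖gradient f y - gradient f z‖ ≤ L * ‖y - z‖) (x v : E) :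
    f (x + v) ≤ f x + ⟪gradient f x, v⟫ + L / 2 * ‖v‖ ^ 2 := by
  have key := le_add_deriv_add_half_of_deriv_le (K := L * ‖v‖ ^ 2)
    (hasDerivAt_image_add_smul hf x v) fun t ht => by
      have hgrad : ⟪gradient f (x + t • v) - gradient f x, v⟫ ≤ L * ‖v‖ ^ 2 * t :=
        calc ⟪gradient f (x + t • v) - gradient f x, v⟫
            ≤ ‖gradient f (x + t • v) - gradient f x‖ * ‖v‖ := real_inner_le_norm _ _
          _ ≤ L * ‖t • v‖ * ‖v‖ := by
            gcongr
            simpa using hlip (x + t • v) x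
          _ = L * ‖v‖ ^ 2 * t := by
            rw [norm_smul, Real.norm_of_nonneg ht.1]; ring
      rw [inner_sub_left] at hgrad
      simp only [zero_smul, add_zero]
      linarith
  simp only [one_smul, zero_smul, add_zero] at key
  linarith

theorem image_sub_smul_starProjection_gradient_le (hf : Differentiable ℝ f) (hL : 0 < L)
    (hlip : ∀ y z, ‖gradient f y - gradient f z‖ ≤ L * ‖y - z‖) (x : E) (K : Submodule ℝ E)
    [K.HasOrthogonalProjection] :
    f (x + (-L⁻¹) • K.starProjection (gradient f x)) ≤
      f x - ‖K.starProjection (gradient f x)‖ ^ 2 / (2 * L) := by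
  set p := K.starProjection (gradient f x)
  calc f (x + (-L⁻¹) • p)
      ≤ f x + ⟪gradient f x, (-L⁻¹) • p⟫ + L / 2 * ‖(-L⁻¹) • p‖ ^ 2 :=
        image_add_le_of_gradient_lipschitz hf hlip x _
    _ = f x - ‖p‖ ^ 2 / (2 * L) := by
        rw [real_inner_smul_right, K.real_inner_starProjection_self, norm_smul, norm_neg,
          norm_inv, Real.norm_of_nonneg hL.le]
        field_simp
        ring

theorem sq_norm_starProjection_gradient_le (hf : Differentiable ℝ f) (hL : 0 < L)
    (hlip : ∀ y z, ‖gradient f y - gradient f z‖ ≤ L * ‖y - z‖) (hbdd : BddBelow (range f))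
    (x : E) (K : Submodule ℝ E) [K.HasOrthogonalProjection] :
    ‖K.starProjection (gradient f x)‖ ^ 2 ≤
      2 * L * (f x - sInf (f '' {y | ∃ s ∈ K, y = x + s})) := by
  have hinf : sInf (f '' {y | ∃ s ∈ K, y = x + s}) ≤
      f (x + (-L⁻¹) • K.starProjection (gradient f x)) :=
    csInf_le (hbdd.mono (image_subset_range _ _))
      ⟨_, ⟨_, K.smul_mem _ (K.starProjection_apply_mem _), rfl⟩, rfl⟩
  have hdesc := image_sub_smul_starProjection_gradient_le hf hL hlip x K
  rw [← div_le_iff₀' (by positivity)]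
  linarith

end Descent

/-- The "if" direction of Proposition 2.1 without convexity: if `dist (∇f (x k), S k) → 0` and
`f (x (k+1)) - inf {f y : y ∈ x k + S k} → 0`, then `‖∇f (x k)‖ → 0`. -/
theorem optimist_gradient_tendsto_zero {n : ℕ}
    (f : EuclideanSpace ℝ (Fin n) → ℝ)
    (hdiff : Differentiable ℝ f)
    (L : ℝ) (hL : 0 < L)
    (hlip : ∀ y z, ‖gradient f y - gradient f z‖ ≤ L * ‖y - z‖)
    (hbdd : BddBelow (Set.range f))
    (x : ℕ → EuclideanSpace ℝ (Fin n))
    (hmono : ∀ k, f (x (k + 1)) ≤ f (x k))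
    (S : ℕ → Submodule ℝ (EuclideanSpace ℝ (Fin n)))
    (hdist : Tendsto (fun k => Metric.infDist (gradient f (x k))
        (S k : Set (EuclideanSpace ℝ (Fin n)))) atTop (𝓝 0))
    (hsub : Tendsto (fun k => f (x (k + 1)) - sInf (f '' {y | ∃ s ∈ S k, y = x k + s}))
        atTop (𝓝 0)) :
    Tendsto (fun k => ‖gradient f (x k)‖) atTop (𝓝 0) := by
  have hgap : Tendsto (fun k => f (x k) - sInf (f '' {y | ∃ s ∈ S k, y = x k + s}))
      atTop (𝓝 0) := by
    have hstep := tendsto_sub_succ_of_antitone (antitone_nat_of_succ_le hmono)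
      (hbdd.mono (range_comp_subset_range x f))
    simpa using (hstep.add hsub).congr fun k => by simp only [Function.comp_apply]; ring
  have hproj : Tendsto (fun k => ‖(S k).starProjection (gradient f (x k))‖) atTop (𝓝 0) := by
    have hsq : Tendsto (fun k => ‖(S k).starProjection (gradient f (x k))‖ ^ 2) atTop (𝓝 0) :=
      squeeze_zero (fun _ => by positivity)
        (fun k => sq_norm_starProjection_gradient_le hdiff hL hlip hbdd (x k) (S k))
        (by simpa using hgap.const_mul (2 * L))
    simpa using hsq.sqrt
  refine squeeze_zero (fun _ => norm_nonneg _) (fun k => ?_) (by simpa using hproj.add hdist)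
  rw [← Submodule.norm_sub_starProjection_eq_infDist]
  exact norm_le_norm_add_norm_sub' _ _
end

section
/- Derivative-free OptimIST setup: let f : ℝⁿ → ℝ be differentiable with ∇f Lipschitz continuous on ℝⁿ with constant L ∈ (0,∞) and f bounded below with f_* = inf f; let η > 0, ζ > 0; let {x_k} ⊂ ℝⁿ, {ĝ_k} ⊂ ℝⁿ, {δ_k} ⊂ (0,∞) with f_k = f(x_k), g_k = ∇f(x_k), satisfying for every k ≥ 0: (i) f_{k+1} ≤ f_k; (ii) f_{k+1} ≤ max{f_k − ηδ_k², f(x_k − δ_k ĝ_k/‖ĝ_k‖)}, where ĝ_k/‖ĝ_k‖ is taken to be 0 if ĝ_k = 0; (iii) ‖ĝ_k − g_k‖ ≤ ζδ_k; (iv) δ_{k+1} = 2δ_k if both ‖ĝ_k‖ ≥ ηδ_k and f_{k+1} ≤ f_k − ηδ_k², and δ_{k+1} = δ_k/2 otherwise. Suppose in addition that f is convex and every level set {x ∈ ℝⁿ : f(x) ≤ c} is bounded, and that g₀ ≠ 0. Then there exists a constant C > 0 such that for every ε ∈ (0, 1], there exists an index k ≤ C/ε with ‖∇f(x_k)‖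 ≤ ε. -/
/-!
Write `Δ k = f (x k) - inf f`. Convexity and the bounded initial level set give
`Δ k ≤ D * ‖∇f (x k)‖`, and the descent lemma shows that every iteration with
`‖∇f (x k)‖ ≥ M * δ k`, `M = η + 2ζ + L/2`, is successful. So a step size is halved only when
`δ k > ‖∇f (x k)‖ / M`, and as long as all gradients exceed `ε` the step sizes stay above
`κ * (Δ k + D * ε)` for a constant `κ > 0`. Each success then decreases `u k = Δ k + D * ε` by at
least `η * κ ^ 2 * u k ^ 2`, so `1 / u k` grows by `η * κ ^ 2` and there are `O(1/ε)` successes.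
Successes double and failures halve the step size, which never drops below `κ * D * ε`, so the
failures outnumber the successes by at most `O(1/ε)` as well.
-/

open RealInnerProductSpace Finset

section Smooth

variable {E : Type*} [NormedAddCommGroup E] [InnerProductSpace ℝ E] [CompleteSpace E]
  {f : E → ℝ}

theorem hasDerivAt_comp_add_smul {x v : E} {t : ℝ} (hf : DifferentiableAt ℝ f (x + t • v)) :
    HasDerivAt (fun s : ℝ => f (x + s • v)) ⟪gradient f (x + t • v), v⟫ t := by
  have hpath : HasDerivAt (fun s : ℝ => x + s • v) v t := by
    simpa using ((hasDerivAt_id t).smul_const v).const_add x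
  simpa [Function.comp_def] using hf.hasGradientAt.hasFDerivAt.comp_hasDerivAt t hpath

theorem le_add_inner_gradient_add_sq (hf : Differentiable ℝ f) {L : ℝ}
    (hlip : ∀ y z, ‖gradient f y - gradient f z‖ ≤ L * ‖y - z‖) (x v : E) :
    f (x + v) ≤ f x + ⟪gradient f x, v⟫ + L / 2 * ‖v‖ ^ 2 := by
  have hφ (t : ℝ) := hasDerivAt_comp_add_smul (t := t) (hf (x + t • v))
  have hB (t : ℝ) :
      HasDerivAt (fun s => f x + s * ⟪gradient f x, v⟫ + L / 2 * ‖v‖ ^ 2 * s ^ 2)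
        (⟪gradient f x, v⟫ + L * ‖v‖ ^ 2 * t) t := by
    refine ((((hasDerivAt_id t).mul_const _).const_add (f x)).add
      ((hasDerivAt_pow 2 t).const_mul (L / 2 * ‖v‖ ^ 2))).congr_deriv ?_
    push_cast; ring
  have hbound (t : ℝ) (ht : t ∈ Set.Ico (0 : ℝ) 1) :
      ⟪gradient f (x + t • v), v⟫ ≤ ⟪gradient f x, v⟫ + L * ‖v‖ ^ 2 * t :=
    calc ⟪gradient f (x + t • v), v⟫
        = ⟪gradient f x, v⟫ + ⟪gradient f (x + t • v) - gradient f x, v⟫ := by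
          rw [inner_sub_left]; ring
      _ ≤ ⟪gradient f x, v⟫ + ‖gradient f (x + t • v) - gradient f x‖ * ‖v‖ := by
          gcongr; exact real_inner_le_norm _ _
      _ ≤ ⟪gradient f x, v⟫ + L * ‖x + t • v - x‖ * ‖v‖ := by gcongr; exact hlip _ _
      _ = ⟪gradient f x, v⟫ + L * ‖v‖ ^ 2 * t := by
          rw [add_sub_cancel_left, norm_smul, Real.norm_of_nonneg ht.1]; ring
  simpa using image_le_of_deriv_right_le_deriv_boundary
    (fun t _ => (hφ t).continuousAt.continuousWithinAt) (fun t _ => (hφ t).hasDerivWithinAt)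
    (by simp) (fun t _ => (hB t).continuousAt.continuousWithinAt)
    (fun t _ => (hB t).hasDerivWithinAt) hbound (Set.right_mem_Icc.2 zero_le_one)

theorem ConvexOn.add_inner_gradient_le (hconv : ConvexOn ℝ Set.univ f) {x : E}
    (hf : DifferentiableAt ℝ f x) (y : E) : f x + ⟪gradient f x, y - x⟫ ≤ f y := by
  have hφ : ConvexOn ℝ Set.univ (fun s : ℝ => f (x + s • (y - x))) := by
    simpa [Function.comp_def, AffineMap.lineMap_apply, add_comm] using
      hconv.comp_affineMap (AffineMap.lineMap x y)
  have := hφ.le_slope_of_hasDerivAt (Set.mem_univ 0) (Set.mem_univ 1) zero_lt_one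
    (hasDerivAt_comp_add_smul (by simpa using hf))
  rw [slope_def_field] at this
  simp only [zero_smul, add_zero, one_smul, add_sub_cancel, sub_zero, div_one] at this
  linarith

-- `‖ghat‖ ≥ (η + ζ + L / 2) * δ`, and a step of length `δ` along `ghat / ‖ghat‖` loses at most
-- `ζ * δ ^ 2` to the gradient error and `L / 2 * δ ^ 2` to curvature.
theorem le_norm_and_le_sub_of_le_norm_gradient (hf : Differentiable ℝ f) {L : ℝ} (hL : 0 ≤ L)
    (hlip : ∀ y z, ‖gradient f y - gradient f z‖ ≤ L * ‖y - z‖) {η ζ δ : ℝ} (hη : 0 < η)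
    (hζ : 0 ≤ ζ) (hδ : 0 < δ) {x ghat : E} (hacc : ‖ghat - gradient f x‖ ≤ ζ * δ)
    (hg : (η + 2 * ζ + L / 2) * δ ≤ ‖gradient f x‖) :
    η * δ ≤ ‖ghat‖ ∧ f (x - (δ / ‖ghat‖) • ghat) ≤ f x - η * δ ^ 2 := by
  have hghat : (η + ζ + L / 2) * δ ≤ ‖ghat‖ := by
    have := norm_sub_norm_le (gradient f x) ghat
    rw [norm_sub_rev] at this
    linarith
  have hpos : 0 < ‖ghat‖ := lt_of_lt_of_le (by positivity) hghat
  refine ⟨by nlinarith, ?_⟩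
  have hinner : ‖ghat‖ - ζ * δ ≤ ⟪gradient f x, (‖ghat‖⁻¹) • ghat⟫ := by
    have hunit : ‖(‖ghat‖⁻¹) • ghat‖ = 1 := norm_smul_inv_norm (norm_pos_iff.1 hpos)
    calc ‖ghat‖ - ζ * δ
        ≤ ⟪ghat, (‖ghat‖⁻¹) • ghat⟫ - ‖ghat - gradient f x‖ * 1 := by
          rw [real_inner_smul_right, real_inner_self_eq_norm_sq]
          field_simp
          linarith
      _ ≤ ⟪ghat, (‖ghat‖⁻¹) • ghat⟫
            - ⟪ghat - gradient f x, (‖ghat‖⁻¹) • ghat⟫ := by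
          rw [← hunit]; gcongr; exact real_inner_le_norm _ _
      _ = ⟪gradient f x, (‖ghat‖⁻¹) • ghat⟫ := by rw [inner_sub_left]; ring
  have hstep : ‖(δ / ‖ghat‖) • ghat‖ = δ := by
    rw [norm_smul, Real.norm_of_nonneg (by positivity)]; field_simp
  have hdescent := le_add_inner_gradient_add_sq hf hlip x (-((δ / ‖ghat‖) • ghat))
  rw [← sub_eq_add_neg, norm_neg, hstep, inner_neg_right, div_eq_mul_inv, mul_smul,
    real_inner_smul_right] at hdescent
  rw [div_eq_mul_inv, mul_smul]
  nlinarith [mul_le_mul_of_nonneg_left hinner hδ.le]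

theorem sub_sInf_le_mul_norm_gradient (hconv : ConvexOn ℝ Set.univ f) {x : E}
    (hf : DifferentiableAt ℝ f x) {D : ℝ} (hD : ∀ y, f y ≤ f x → ‖x - y‖ ≤ D) :
    f x - sInf (Set.range f) ≤ D * ‖gradient f x‖ := by
  have hD0 : 0 ≤ D * ‖gradient f x‖ := by
    have := hD x le_rfl
    rw [sub_self, norm_zero] at this
    positivity
  refine le_of_forall_pos_lt_add fun θ hθ => ?_
  obtain ⟨_, ⟨y, rfl⟩, hy⟩ :=
    exists_lt_of_csInf_lt (Set.range_nonempty f) (lt_add_of_pos_right _ hθ)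
  rcases le_or_gt (f y) (f x) with hyx | hxy
  · have hconvex := hconv.add_inner_gradient_le hf y
    have : ⟪gradient f x, x - y⟫ ≤ ‖gradient f x‖ * D :=
      (real_inner_le_norm _ _).trans (mul_le_mul_of_nonneg_left (hD y hyx) (norm_nonneg _))
    rw [← neg_sub x y, inner_neg_right] at hconvex
    linarith
  · linarith

end Smooth

section StepSize

variable {δ : ℕ → ℝ} {p : ℕ → Prop} [DecidablePred p]

theorem min_le_of_forall_le_succ_or {b : ℕ → ℝ} (hb : Antitone b) {N : ℕ}
    (h : ∀ k < N, δ k ≤ δ (k + 1) ∨ b k ≤ δ (k + 1)) : ∀ k ≤ N, min (δ 0) (b k) ≤ δ k := by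
  intro k
  induction k with
  | zero => exact fun _ => min_le_left _ _
  | succ k ih =>
    intro hk
    have hmin : min (δ 0) (b (k + 1)) ≤ min (δ 0) (b k) := min_le_min_left _ (hb k.le_succ)
    rcases h k hk with hδ | hδ
    · exact hmin.trans ((ih (k.le_succ.trans hk)).trans hδ)
    · exact (min_le_right _ _).trans ((hb k.le_succ).trans hδ)

-- `1 / u` is monotone and grows by at least `c` at every step where `p` holds.
theorem mul_card_filter_le_inv {u : ℕ → ℝ} (hu : ∀ k, 0 < u k) (hanti : Antitone u)
    {c : ℝ} {N : ℕ} (hdec : ∀ k < N, p k → c * u k ^ 2 ≤ u k - u (k + 1)) :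
    c * #{k ∈ range N | p k} ≤ 1 / u N := by
  have hstep : ∀ k ∈ range N, p k → c ≤ 1 / u (k + 1) - 1 / u k := by
    intro k hk hpk
    have := hdec k (mem_range.1 hk) hpk
    have := hu k; have := hu (k + 1)
    rw [div_sub_div _ _ (hu _).ne' (hu _).ne', le_div_iff₀ (by positivity)]
    nlinarith [hanti k.le_succ]
  have hmono : ∀ k ∈ range N, 0 ≤ 1 / u (k + 1) - 1 / u k := fun k _ =>
    sub_nonneg.2 (one_div_le_one_div_of_le (hu _) (hanti k.le_succ))
  calc c * #{k ∈ range N | p k} = ∑ k ∈ range N with p k, c := by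
        rw [sum_const, nsmul_eq_mul, mul_comm]
    _ ≤ ∑ k ∈ range N with p k, (1 / u (k + 1) - 1 / u k) :=
        sum_le_sum fun k hk => hstep k (mem_filter.1 hk).1 (mem_filter.1 hk).2
    _ ≤ ∑ k ∈ range N, (1 / u (k + 1) - 1 / u k) :=
        sum_le_sum_of_subset_of_nonneg (filter_subset _ _) fun k hk _ => hmono k hk
    _ = 1 / u N - 1 / u 0 := sum_range_sub (fun k => 1 / u k) N
    _ ≤ 1 / u N := sub_le_self _ (by have := hu 0; positivity)

theorem mul_two_pow_eq_mul_four_pow_card (hup : ∀ k, p k → δ (k + 1) = 2 * δ k)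
    (hdown : ∀ k, ¬p k → δ (k + 1) = δ k / 2) (N : ℕ) :
    δ N * 2 ^ N = δ 0 * 4 ^ #{k ∈ range N | p k} := by
  induction N with
  | zero => simp
  | succ N ih =>
    rw [range_add_one, filter_insert]
    by_cases hp : p N
    · rw [if_pos hp, card_insert_of_notMem (by simp), hup N hp, pow_succ, pow_succ]
      linear_combination 4 * ih
    · rw [if_neg hp, hdown N hp, pow_succ]
      linear_combination ih

theorem natCast_le_two_mul_card_add_div (hup : ∀ k, p k → δ (k + 1) = 2 * δ k)
    (hdown : ∀ k, ¬p k → δ (k + 1) = δ k / 2) {m : ℝ} (hm : 0 < m) {N : ℕ} (hN : m ≤ δ N) :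
    (N : ℝ) ≤ 2 * #{k ∈ range N | p k} + δ 0 / m := by
  set s := #{k ∈ range N | p k}
  have hpow : m * 2 ^ N ≤ δ 0 * 2 ^ (2 * s) := by
    rw [pow_mul, show (2 : ℝ) ^ 2 = 4 by norm_num,
      ← mul_two_pow_eq_mul_four_pow_card hup hdown]
    gcongr
  clear_value s
  rcases le_or_gt N (2 * s) with hN2 | hN2
  · have : 0 ≤ δ 0 := nonneg_of_mul_nonneg_left ((by positivity : 0 ≤ m * 2 ^ N).trans hpow)
      (by positivity)
    have : 0 ≤ δ 0 / m := by positivity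
    have : (N : ℝ) ≤ 2 * s := by exact_mod_cast hN2
    linarith
  · obtain ⟨t, rfl⟩ := Nat.exists_eq_add_of_le hN2.le
    rw [pow_add, mul_comm (2 ^ (2 * s) : ℝ), ← mul_assoc] at hpow
    have ht : m * 2 ^ t ≤ δ 0 := le_of_mul_le_mul_right hpow (by positivity)
    have : (t : ℝ) < 2 ^ t := by exact_mod_cast Nat.lt_two_pow_self
    have : (2 : ℝ) ^ t ≤ δ 0 / m := by rw [le_div_iff₀ hm]; linarith
    push_cast
    linarith

theorem exists_natCast_le_div_of_step_rule {Δ G : ℕ → ℝ} {η M D : ℝ} (hη : 0 < η) (hM : 0 < M)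
    (hD : 0 < D) (hδ : ∀ k, 0 < δ k) (hΔ : ∀ k, 0 ≤ Δ k) (hanti : Antitone Δ)
    (hgap : ∀ k, Δ k ≤ D * G k)
    (hsucc : ∀ k, p k → δ (k + 1) = 2 * δ k ∧ η * δ k ^ 2 ≤ Δ k - Δ (k + 1))
    (hfail : ∀ k, ¬p k → δ (k + 1) = δ k / 2 ∧ G k < M * δ k) :
    ∃ C > 0, ∀ ε, 0 < ε → ε ≤ 1 → ∀ N : ℕ, (∀ k < N, ε < G k) → (N : ℝ) ≤ C / ε := by
  set κ := min (1 / (4 * M * D)) (δ 0 / (Δ 0 + D))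
  have hκ : 0 < κ := lt_min (by positivity) (div_pos (hδ 0) (by linarith [hΔ 0]))
  refine ⟨2 / (η * κ ^ 2 * D) + δ 0 / (κ * D), by have := hδ 0; positivity, ?_⟩
  intro ε hε hε1 N hG
  set u : ℕ → ℝ := fun k => Δ k + D * ε
  have hu : ∀ k, 0 < u k := fun k => by have := hΔ k; positivity
  have hu_anti : Antitone u := fun a b hab => add_le_add_left (hanti hab) _
  -- a failed step at `k < N` halves `δ k > G k / M`, and `2 * D * G k ≥ Δ k + D * ε = u k`
  have hlow : ∀ k ≤ N, κ * u k ≤ δ k := by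
    have hmin := min_le_of_forall_le_succ_or (δ := δ) (N := N)
      (b := fun k => u k / (4 * M * D))
      (fun a b hab => div_le_div_of_nonneg_right (hu_anti hab) (by positivity)) fun k hk => by
        by_cases hp : p k
        · exact Or.inl (by rw [(hsucc k hp).1]; linarith [hδ k])
        · right
          obtain ⟨hhalf, hG'⟩ := hfail k hp
          rw [hhalf, div_le_iff₀ (by positivity)]
          nlinarith [hgap k, hG k hk]
    intro k hk
    refine le_trans (le_min ?_ ?_) (hmin k hk)
    · calc κ * u k ≤ δ 0 / (Δ 0 + D) * (Δ 0 + D) :=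
            mul_le_mul (min_le_right _ _) (by nlinarith [hanti k.zero_le]) (hu k).le (by
              have := hδ 0; have := hΔ 0; positivity)
        _ = δ 0 := div_mul_cancel₀ _ (by linarith [hΔ 0])
    · exact (mul_le_mul_of_nonneg_right (min_le_left _ _) (hu k).le).trans_eq (by ring)
  have hsuccesses : η * κ ^ 2 * #{k ∈ range N | p k} ≤ 1 / (D * ε) := by
    refine (mul_card_filter_le_inv hu hu_anti fun k hk hp => ?_).trans
      (one_div_le_one_div_of_le (by positivity) (by simp [u, hΔ N]))
    have := hlow k hk.le
    calc η * κ ^ 2 * u k ^ 2 = η * (κ * u k) ^ 2 := by ring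
      _ ≤ η * δ k ^ 2 := by gcongr; exact mul_nonneg hκ.le (hu k).le
      _ ≤ u k - u (k + 1) := by simp only [u]; linarith [(hsucc k hp).2]
  have hsteps := natCast_le_two_mul_card_add_div (fun k hp => (hsucc k hp).1)
    (fun k hp => (hfail k hp).1) (by positivity : 0 < κ * (D * ε))
    ((mul_le_mul_of_nonneg_left (by simp [u, hΔ N]) hκ.le).trans (hlow N le_rfl))
  calc (N : ℝ) ≤ 2 * #{k ∈ range N | p k} + δ 0 / (κ * (D * ε)) := hsteps
    _ ≤ 2 * (1 / (D * ε) / (η * κ ^ 2)) + δ 0 / (κ * (D * ε)) := by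
        gcongr; rwa [le_div_iff₀' (by positivity)]
    _ = (2 / (η * κ ^ 2 * D) + δ 0 / (κ * D)) / ε := by field_simp

theorem exists_le_of_forall_lt_imp_natCast_le {G : ℕ → ℝ} {ε B : ℝ} (hB : 0 ≤ B)
    (h : ∀ N : ℕ, (∀ k < N, ε < G k) → (N : ℝ) ≤ B) : ∃ k : ℕ, (k : ℝ) ≤ B ∧ G k ≤ ε := by
  by_contra! hG
  have := h (⌊B⌋₊ + 1) fun k hk =>
    hG k ((Nat.cast_le.2 (Nat.lt_succ_iff.1 hk)).trans (Nat.floor_le hB))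
  push_cast at this
  linarith [Nat.lt_floor_add_one B]

end StepSize

theorem optimist_complexity_convex_general {n : ℕ}
    (f : EuclideanSpace ℝ (Fin n) → ℝ)
    (hdiff : Differentiable ℝ f)
    (L : ℝ) (hL : 0 < L)
    (hlip : ∀ y z, ‖gradient f y - gradient f z‖ ≤ L * ‖y - z‖)
    (hbdd : BddBelow (Set.range f))
    (η ζ : ℝ) (hη : 0 < η) (hζ : 0 < ζ)
    (x ghat : ℕ → EuclideanSpace ℝ (Fin n)) (δ : ℕ → ℝ) (hδ : ∀ k, 0 < δ k)
    (hmono : ∀ k, f (x (k + 1)) ≤ f (x k))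
    (hsd : ∀ k, f (x (k + 1)) ≤
      max (f (x k) - η * δ k ^ 2) (f (x k - (δ k / ‖ghat k‖) • ghat k)))
    (hacc : ∀ k, ‖ghat k - gradient f (x k)‖ ≤ ζ * δ k)
    (hupd : ∀ k,
      ((η * δ k ≤ ‖ghat k‖ ∧ f (x (k + 1)) ≤ f (x k) - η * δ k ^ 2) → δ (k + 1) = 2 * δ k) ∧
      (¬(η * δ k ≤ ‖ghat k‖ ∧ f (x (k + 1)) ≤ f (x k) - η * δ k ^ 2) → δ (k + 1) = δ k / 2))
    (hconv : ConvexOn ℝ Set.univ f)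
    (hlevel : ∀ c : ℝ, Bornology.IsBounded {y | f y ≤ c}) :
    ∃ C : ℝ, 0 < C ∧ ∀ ε : ℝ, 0 < ε → ε ≤ 1 →
      ∃ k : ℕ, (k : ℝ) ≤ C / ε ∧ ‖gradient f (x k)‖ ≤ ε := by
  obtain ⟨R, hR, hRle⟩ := (hlevel (f (x 0))).exists_pos_norm_le
  have hfx : Antitone fun k => f (x k) := antitone_nat_of_succ_le hmono
  have hdiam (k : ℕ) (y : EuclideanSpace ℝ (Fin n)) (hy : f y ≤ f (x k)) : ‖x k - y‖ ≤ 2 * R := by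
    have := hRle _ (hfx k.zero_le)
    have := hRle y (hy.trans (hfx k.zero_le))
    linarith [norm_sub_le (x k) y]
  obtain ⟨C, hC, hN⟩ := exists_natCast_le_div_of_step_rule
    (Δ := fun k => f (x k) - sInf (Set.range f)) (G := fun k => ‖gradient f (x k)‖)
    (M := η + 2 * ζ + L / 2) hη (by positivity) (by positivity) hδ
    (fun k => sub_nonneg.2 (csInf_le hbdd ⟨_, rfl⟩))
    (fun a b hab => sub_le_sub_right (hfx hab) _)
    (fun k => sub_sInf_le_mul_norm_gradient hconv (hdiff _) (hdiam k))
    (fun k hp => ⟨(hupd k).1 hp, by linarith [hp.2]⟩)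
    (fun k hp => ⟨(hupd k).2 hp, lt_of_not_ge fun hg => hp <| by
      obtain ⟨hghat, hdecrease⟩ := le_norm_and_le_sub_of_le_norm_gradient hdiff hL.le hlip hη
        hζ.le (hδ k) (hacc k) hg
      exact ⟨hghat, (hsd k).trans (max_le le_rfl hdecrease)⟩⟩)
  exact ⟨C, hC, fun ε hε hε1 =>
    exists_le_of_forall_lt_imp_natCast_le (by positivity) (hN ε hε hε1)⟩

/-- Worst-case complexity of the derivative-free OptimIST framework in the convex case:
if `f` is convex with bounded level sets, then there is a constant `C > 0` such that for every
`ε ∈ (0, 1]` some iterate `k ≤ C / ε` satisfies `‖∇f (x k)‖ ≤ ε`. -/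
theorem optimist_complexity_convex {n : ℕ}
    (f : EuclideanSpace ℝ (Fin n) → ℝ)
    (hdiff : Differentiable ℝ f)
    (L : ℝ) (hL : 0 < L)
    (hlip : ∀ y z, ‖gradient f y - gradient f z‖ ≤ L * ‖y - z‖)
    (hbdd : BddBelow (Set.range f))
    (η ζ : ℝ) (hη : 0 < η) (hζ : 0 < ζ)
    (x ghat : ℕ → EuclideanSpace ℝ (Fin n)) (δ : ℕ → ℝ) (hδ : ∀ k, 0 < δ k)
    (hmono : ∀ k, f (x (k + 1)) ≤ f (x k))
    (hsd : ∀ k, f (x (k + 1)) ≤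
      max (f (x k) - η * δ k ^ 2) (f (x k - (δ k / ‖ghat k‖) • ghat k)))
    (hacc : ∀ k, ‖ghat k - gradient f (x k)‖ ≤ ζ * δ k)
    (hupd : ∀ k,
      ((η * δ k ≤ ‖ghat k‖ ∧ f (x (k + 1)) ≤ f (x k) - η * δ k ^ 2) → δ (k + 1) = 2 * δ k) ∧
      (¬(η * δ k ≤ ‖ghat k‖ ∧ f (x (k + 1)) ≤ f (x k) - η * δ k ^ 2) → δ (k + 1) = δ k / 2))
    (hconv : ConvexOn ℝ Set.univ f)
    (hlevel : ∀ c : ℝ, Bornology.IsBounded {y | f y ≤ c})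
    (hg0 : gradient f (x 0) ≠ 0) :
    ∃ C : ℝ, 0 < C ∧ ∀ ε : ℝ, 0 < ε → ε ≤ 1 →
      ∃ k : ℕ, (k : ℝ) ≤ C / ε ∧ ‖gradient f (x k)‖ ≤ ε :=
  optimist_complexity_convex_general f hdiff L hL hlip hbdd η ζ hη hζ x ghat δ hδ hmono hsd hacc
    hupd hconv hlevel
end

section
/- Derivative-free OptimIST setup: let f : ℝⁿ → ℝ be differentiable with ∇f Lipschitz continuous on ℝⁿ with constant L ∈ (0,∞) and f bounded below with f_* = inf f; let η > 0, ζ > 0; let {x_k} ⊂ ℝⁿ, {ĝ_k} ⊂ ℝⁿ, {δ_k} ⊂ (0,∞) with f_k = f(x_k), g_k = ∇f(x_k), satisfying for every k ≥ 0: (i) f_{k+1} ≤ f_k; (ii) f_{k+1} ≤ max{f_k − ηδ_k², f(x_k − δ_k ĝ_k/‖ĝ_k‖)}, where ĝ_k/‖ĝ_k‖ is taken to be 0 if ĝ_k = 0; (iii) ‖ĝ_k − g_k‖ ≤ ζδ_k; (iv) δ_{k+1} = 2δ_k if both ‖ĝ_k‖ ≥ ηδ_k and f_{k+1} ≤ f_k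 − ηδ_k², and δ_{k+1} = δ_k/2 otherwise. Suppose in addition that f is σ-strongly convex for some σ > 0 (i.e., x ↦ f(x) − (σ/2)‖x‖² is convex), and that g₀ ≠ 0. Then there exists a constant C > 0 such that for every ε ∈ (0, 1], there exists an index k ≤ C(1 + log(1/ε)) with ‖∇f(x_k)‖ ≤ ε. -/
/-!
An iteration is unsuccessful only if `‖ĝ_k‖ < (η + ζ + L) δ_k`, since otherwise the descent lemma
makes the trial step decrease `f` by `η δ_k²`. There `‖∇f(x_k)‖ ≤ Λ δ_k` with `Λ = η + 2ζ + L`,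
and by the Polyak–Łojasiewicz inequality `f_k - f_* ≤ Λ² δ_k² / (2σ)`. So while `‖∇f‖ > ε` the
step size stays above a constant multiple of `ε`, and the number of iterations is at most twice
the number of successful ones plus `O(log 1/ε)`. Only boundedly many successful iterations
precede the first unsuccessful one; after it `f_k - f_* = O(δ_k²)` persists, so every successful
iteration shrinks `f - f_*` by a fixed factor, which can happen only `O(log 1/ε)` times before
`‖∇f‖² ≤ 4L (f - f_*)` falls below `ε²`.
-/

open Real
open scoped RealInnerProductSpace

lemma ConvexOn.add_le_of_hasFDerivAt {E : Type*} [NormedAddCommGroup E] [NormedSpace ℝ E]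
    {g : E → ℝ} {g' : E →L[ℝ] ℝ} {a : E} (hg : ConvexOn ℝ Set.univ g)
    (hg' : HasFDerivAt g g' a) (b : E) : g a + g' (b - a) ≤ g b := by
  let γ : ℝ →ᵃ[ℝ] E := AffineMap.lineMap a b
  have hγ : HasDerivAt (g ∘ γ) (g' (b - a)) 0 :=
    hg'.comp_hasDerivAt_of_eq 0 AffineMap.hasDerivAt_lineMap (by simp [γ])
  have := (hg.comp_affineMap γ).le_slope_of_hasDerivAt
    (Set.mem_univ 0) (Set.mem_univ 1) zero_lt_one hγ
  simp only [slope_def_field, Function.comp_apply, AffineMap.lineMap_apply_one,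
    AffineMap.lineMap_apply_zero, sub_zero, div_one, γ] at this
  linarith

section Gradient

variable {E : Type*} [NormedAddCommGroup E] [InnerProductSpace ℝ E] [CompleteSpace E]
  {f : E → ℝ}

lemma add_inner_gradient_add_le_of_convexOn_sub {σ : ℝ} (hf : Differentiable ℝ f)
    (hstrong : ConvexOn ℝ Set.univ (fun y => f y - σ / 2 * ‖y‖ ^ 2)) (a b : E) :
    f a + ⟪gradient f a, b - a⟫ + σ / 2 * ‖b - a‖ ^ 2 ≤ f b := by
  have hder := (hf a).hasGradientAt.hasFDerivAt.sub
    ((hasStrictFDerivAt_norm_sq a).hasFDerivAt.const_mul (σ / 2))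
  have := hstrong.add_le_of_hasFDerivAt hder b
  simp only [sub_apply, smul_apply, InnerProductSpace.toDual_apply_apply, innerSL_apply_apply,
    nsmul_eq_mul, smul_eq_mul, Nat.cast_ofNat] at this
  have hsq : ‖b - a‖ ^ 2 = ‖b‖ ^ 2 - 2 * ⟪a, b - a⟫ - ‖a‖ ^ 2 := by
    rw [inner_sub_right, real_inner_self_eq_norm_sq, norm_sub_sq_real, real_inner_comm]
    ring
  rw [hsq]
  linarith

lemma le_add_inner_gradient_add {L : ℝ} (hL : 0 ≤ L) (hf : Differentiable ℝ f)
    (hlip : ∀ y z, ‖gradient f y - gradient f z‖ ≤ L * ‖y - z‖) (a b : E) :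
    f b ≤ f a + ⟪gradient f a, b - a⟫ + L * ‖b - a‖ ^ 2 := by
  have hfderiv : ∀ y, fderiv ℝ f y = InnerProductSpace.toDual ℝ E (gradient f y) :=
    fun y => (hf y).hasGradientAt.hasFDerivAt.fderiv
  have hbound : ∀ z ∈ segment ℝ a b, ‖fderiv ℝ f z - fderiv ℝ f a‖ ≤ L * ‖b - a‖ := by
    intro z hz
    rw [hfderiv, hfderiv, ← map_sub, LinearIsometryEquiv.norm_map]
    calc ‖gradient f z - gradient f a‖ ≤ L * ‖z - a‖ := hlip z a
      _ ≤ L * ‖b - a‖ := by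
        gcongr
        simpa [dist_eq_norm, norm_sub_rev a b] using segment_subset_closedBall_left a b hz
  have := (convex_segment a b).norm_image_sub_le_of_norm_fderiv_le' (fun z _ => hf z) hbound
    (left_mem_segment ℝ a b) (right_mem_segment ℝ a b)
  rw [hfderiv, InnerProductSpace.toDual_apply_apply, Real.norm_eq_abs] at this
  nlinarith [(abs_le.mp this).2]

lemma sub_sInf_le_norm_gradient_sq_div {σ : ℝ} (hσ : 0 < σ) (hf : Differentiable ℝ f)
    (hstrong : ConvexOn ℝ Set.univ (fun y => f y - σ / 2 * ‖y‖ ^ 2)) (a : E) :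
    f a - sInf (Set.range f) ≤ ‖gradient f a‖ ^ 2 / (2 * σ) := by
  suffices f a - ‖gradient f a‖ ^ 2 / (2 * σ) ≤ sInf (Set.range f) by linarith
  refine le_csInf (Set.range_nonempty f) ?_
  rintro _ ⟨b, rfl⟩
  have hinner := neg_le_of_abs_le (abs_real_inner_le_norm (gradient f a) (b - a))
  have hsq : ‖gradient f a‖ * ‖b - a‖ ≤ ‖gradient f a‖ ^ 2 / (2 * σ) + σ / 2 * ‖b - a‖ ^ 2 := by
    rw [div_add' _ _ _ (by positivity), le_div_iff₀ (by positivity)]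
    nlinarith [sq_nonneg (‖gradient f a‖ - σ * ‖b - a‖)]
  linarith [add_inner_gradient_add_le_of_convexOn_sub hf hstrong a b]

lemma norm_gradient_sq_le_mul_sub_sInf {L : ℝ} (hL : 0 < L) (hf : Differentiable ℝ f)
    (hlip : ∀ y z, ‖gradient f y - gradient f z‖ ≤ L * ‖y - z‖) (hbdd : BddBelow (Set.range f))
    (a : E) : ‖gradient f a‖ ^ 2 ≤ 4 * L * (f a - sInf (Set.range f)) := by
  have hdesc := le_add_inner_gradient_add hL.le hf hlip a (a - (2 * L)⁻¹ • gradient f a)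
  rw [sub_sub_cancel_left, inner_neg_right, real_inner_smul_right, real_inner_self_eq_norm_sq,
    norm_neg, norm_smul, Real.norm_eq_abs, abs_of_pos (by positivity)] at hdesc
  have hinf := csInf_le hbdd ⟨a - (2 * L)⁻¹ • gradient f a, rfl⟩
  have : ‖gradient f a‖ ^ 2 = 4 * L * ((2 * L)⁻¹ * ‖gradient f a‖ ^ 2
      - L * ((2 * L)⁻¹ * ‖gradient f a‖) ^ 2) := by
    field_simp
    ring
  rw [this]
  exact mul_le_mul_of_nonneg_left (by linarith) (by positivity)

lemma apply_sub_div_norm_smul_le {L η ζ δ : ℝ} (hL : 0 ≤ L) (hf : Differentiable ℝ f)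
    (hlip : ∀ y z, ‖gradient f y - gradient f z‖ ≤ L * ‖y - z‖) {x ĝ : E} (hδ : 0 ≤ δ)
    (hĝ : ĝ ≠ 0) (hacc : ‖ĝ - gradient f x‖ ≤ ζ * δ) (hlarge : (η + ζ + L) * δ ≤ ‖ĝ‖) :
    f (x - (δ / ‖ĝ‖) • ĝ) ≤ f x - η * δ ^ 2 := by
  have hĝpos : 0 < ‖ĝ‖ := norm_pos_iff.mpr hĝ
  have hdesc := le_add_inner_gradient_add hL hf hlip x (x - (δ / ‖ĝ‖) • ĝ)
  rw [sub_sub_cancel_left, inner_neg_right, real_inner_smul_right, norm_neg, norm_smul,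
    Real.norm_eq_abs, abs_of_nonneg (by positivity), div_mul_cancel₀ _ hĝpos.ne'] at hdesc
  have hinner : ‖ĝ‖ ^ 2 - ζ * δ * ‖ĝ‖ ≤ ⟪gradient f x, ĝ⟫ := by
    have := real_inner_le_norm (ĝ - gradient f x) ĝ
    rw [inner_sub_left, real_inner_self_eq_norm_sq] at this
    nlinarith [mul_le_mul_of_nonneg_right hacc hĝpos.le]
  have : δ * ‖ĝ‖ - ζ * δ ^ 2 ≤ δ / ‖ĝ‖ * ⟪gradient f x, ĝ⟫ := by
    calc δ * ‖ĝ‖ - ζ * δ ^ 2 = δ / ‖ĝ‖ * (‖ĝ‖ ^ 2 - ζ * δ * ‖ĝ‖) := by field_simp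
      _ ≤ δ / ‖ĝ‖ * ⟪gradient f x, ĝ⟫ := by gcongr
  nlinarith

lemma norm_gradient_le_of_not_sufficient_decrease {L η ζ δ : ℝ} (hL : 0 ≤ L)
    (hf : Differentiable ℝ f) (hlip : ∀ y z, ‖gradient f y - gradient f z‖ ≤ L * ‖y - z‖)
    (hη : 0 < η) (hζ : 0 ≤ ζ) {x x' ĝ : E} (hδ : 0 < δ)
    (hsd : f x' ≤ max (f x - η * δ ^ 2) (f (x - (δ / ‖ĝ‖) • ĝ)))
    (hacc : ‖ĝ - gradient f x‖ ≤ ζ * δ)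
    (hfail : ¬(η * δ ≤ ‖ĝ‖ ∧ f x' ≤ f x - η * δ ^ 2)) :
    ‖gradient f x‖ ≤ (η + 2 * ζ + L) * δ := by
  have hĝ : ‖ĝ‖ < (η + ζ + L) * δ := by
    by_contra! hlarge
    have hĝ : ĝ ≠ 0 := norm_pos_iff.mp (hlarge.trans_lt' (by positivity))
    exact hfail ⟨by nlinarith, hsd.trans (max_le le_rfl
      (apply_sub_div_norm_smul_le hL hf hlip hδ.le hĝ hacc hlarge))⟩
  linarith [norm_le_norm_add_norm_sub' (gradient f x) ĝ, norm_sub_rev (gradient f x) ĝ]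

end Gradient

lemma exists_le_mul_one_add_of_forall_le {q : ℕ → Prop} {A B ℓ : ℝ} (hA : 0 ≤ A) (hB : 0 ≤ B)
    (hℓ : 0 ≤ ℓ) (h : ∀ N : ℕ, (∀ k ≤ N, ¬ q k) → (N : ℝ) ≤ A + B * ℓ) :
    ∃ k : ℕ, (k : ℝ) ≤ (A + B + 1) * (1 + ℓ) ∧ q k := by
  by_contra! hq
  set N := ⌊(A + B + 1) * (1 + ℓ)⌋₊
  have hN : (N : ℝ) ≤ A + B * ℓ := h N fun k hk =>
    hq k ((Nat.cast_le.mpr hk).trans (Nat.floor_le (by positivity)))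
  have := Nat.lt_floor_add_one ((A + B + 1) * (1 + ℓ))
  nlinarith

lemma nat_mul_log_le_log_div {a b q : ℝ} {s : ℕ} (ha : 0 < a) (hq : 0 < q)
    (h : a * q ^ s ≤ b) : s * log q ≤ log (b / a) := by
  have hb : 0 < b := (by positivity : 0 < a * q ^ s).trans_le h
  have := log_le_log (by positivity) h
  rw [log_mul ha.ne' (by positivity), log_pow] at this
  rw [log_div hb.ne' ha.ne']
  linarith

lemma Nat.count_le_add_count {P R : ℕ → Prop} [DecidablePred P] [DecidablePred R] {N₀ : ℕ}
    (h : ∀ k, N₀ ≤ k → P k → R k) (N : ℕ) : Nat.count P N ≤ N₀ + Nat.count R N := by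
  induction N with
  | zero => simp
  | succ N ih =>
    rcases lt_or_ge N N₀ with hN | hN
    · exact (Nat.count_le P).trans (by omega)
    · rw [Nat.count_succ, Nat.count_succ]
      by_cases hP : P N
      · simp only [hP, h N hN hP, if_true]; omega
      · simp only [hP, if_false]; omega

section StepSize

/- `d` is a step size, doubled after a successful iteration (`P k`) and halved otherwise; `F` is
the optimality gap and `G` the criticality measure. -/
variable {F d G : ℕ → ℝ} {P : ℕ → Prop} [DecidablePred P]

lemma mul_two_pow_eq_mul_four_pow_count
    (hd : ∀ k, d (k + 1) = if P k then 2 * d k else d k / 2) (N : ℕ) :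
    d N * 2 ^ N = d 0 * 4 ^ Nat.count P N := by
  induction N with
  | zero => simp
  | succ N ih =>
    rw [Nat.count_succ, hd, pow_succ, pow_add]
    by_cases hP : P N
    · simp only [hP, if_true]; linear_combination 4 * ih
    · simp only [hP, if_false]; linear_combination ih

lemma stepSize_eq_two_pow_mul (hd : ∀ k, d (k + 1) = if P k then 2 * d k else d k / 2) {k : ℕ}
    (h : ∀ j < k, P j) : d k = 2 ^ k * d 0 := by
  have := mul_two_pow_eq_mul_four_pow_count hd k
  rw [Nat.count_iff_forall.mpr h, show (4 : ℝ) ^ k = 2 ^ k * 2 ^ k by rw [← mul_pow]; norm_num]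
    at this
  exact mul_right_cancel₀ (pow_ne_zero k two_ne_zero) (by rw [this]; ring)

lemma nat_mul_log_two_le {m : ℝ} (hd : ∀ k, d (k + 1) = if P k then 2 * d k else d k / 2)
    (hm : 0 < m) {N : ℕ} (hmN : m ≤ d N) :
    N * log 2 ≤ 2 * Nat.count P N * log 2 + log (d 0 / m) := by
  have h := mul_le_mul_of_nonneg_right hmN (by positivity : (0 : ℝ) ≤ 2 ^ N)
  rw [mul_two_pow_eq_mul_four_pow_count hd N] at h
  have h4 : log 4 = 2 * log 2 := by
    rw [show (4 : ℝ) = 2 ^ 2 by norm_num, log_pow, Nat.cast_ofNat]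
  have hd0 : 0 < d 0 := pos_of_mul_pos_left ((by positivity : 0 < m * 2 ^ N).trans_le h)
    (by positivity)
  have := nat_mul_log_le_log_div hm two_pos h
  rw [mul_div_right_comm, log_mul (by positivity) (by positivity), log_pow, h4] at this
  linarith

lemma le_stepSize_of_forall_lt {Λ m ε : ℝ} (hd_pos : ∀ k, 0 < d k)
    (hd : ∀ k, d (k + 1) = if P k then 2 * d k else d k / 2) (hΛ : 0 < Λ)
    (hfail : ∀ k, ¬ P k → G k ≤ Λ * d k) (hm : m ≤ d 0) (hmε : 2 * Λ * m ≤ ε) {N : ℕ}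
    (hG : ∀ k < N, ε < G k) : m ≤ d N := by
  induction N with
  | zero => exact hm
  | succ N ih =>
    have ih := ih fun k hk => hG k (by omega)
    rw [hd]
    split_ifs with hP
    · linarith [hd_pos N]
    · have : Λ * (2 * m) < Λ * d N := by linarith [hfail N hP, hG N (by omega)]
      linarith [lt_of_mul_lt_mul_left this hΛ.le]

lemma nat_mul_log_two_le_of_forall_lt {Λ ε : ℝ} (hd_pos : ∀ k, 0 < d k)
    (hd : ∀ k, d (k + 1) = if P k then 2 * d k else d k / 2) (hΛ : 0 < Λ)
    (hfail : ∀ k, ¬ P k → G k ≤ Λ * d k) (hε : 0 < ε) (hε1 : ε ≤ 1) {N : ℕ}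
    (hG : ∀ k < N, ε < G k) :
    N * log 2 ≤ 2 * Nat.count P N * log 2 + log (d 0 / min (d 0) (1 / (2 * Λ))) + log (1 / ε) := by
  have hm₀ : 0 < min (d 0) (1 / (2 * Λ)) := lt_min (hd_pos 0) (by positivity)
  have hmN : ε * min (d 0) (1 / (2 * Λ)) ≤ d N := le_stepSize_of_forall_lt hd_pos hd hΛ hfail
    (by nlinarith [min_le_left (d 0) (1 / (2 * Λ))])
    (by nlinarith [(le_div_iff₀ (by positivity)).mp (min_le_right (d 0) (1 / (2 * Λ)))]) hG
  have := nat_mul_log_two_le hd (by positivity) hmN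
  rw [mul_comm, ← div_div, div_right_comm, log_div (div_pos (hd_pos 0) hm₀).ne' hε.ne'] at this
  linarith [show log (1 / ε) = -log ε by rw [one_div, log_inv]]

lemma exists_forall_ge_exists_not {η : ℝ} (hd_pos : ∀ k, 0 < d k)
    (hd : ∀ k, d (k + 1) = if P k then 2 * d k else d k / 2) (hF : ∀ k, 0 ≤ F k)
    (hFanti : Antitone F) (hη : 0 < η) (hsucc : ∀ k, P k → F (k + 1) ≤ F k - η * d k ^ 2) :
    ∃ N₀, ∀ k, N₀ ≤ k → ∃ j < k, ¬ P j := by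
  obtain ⟨n, hn⟩ := pow_unbounded_of_one_lt (F 0 / (η * d 0 ^ 2)) one_lt_two
  rw [div_lt_iff₀ (by have := hd_pos 0; positivity)] at hn
  refine ⟨n + 1, fun k hk => ?_⟩
  by_contra! hall
  have hdn := stepSize_eq_two_pow_mul hd fun j (hj : j < n) => hall j (by omega)
  have h2n : (1 : ℝ) ≤ 2 ^ n := one_le_pow₀ one_le_two
  have hstep : 2 ^ n * (η * d 0 ^ 2) ≤ η * d n ^ 2 := by
    have := mul_le_mul_of_nonneg_left h2n (by positivity : 0 ≤ 2 ^ n * (η * d 0 ^ 2))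
    rw [hdn]
    linarith
  linarith [hsucc n (hall n (by omega)), hF (n + 1), hFanti (Nat.zero_le n)]

lemma le_four_mul_sq_of_not_of_lt {M : ℝ} (hM : 0 ≤ M)
    (hd : ∀ k, d (k + 1) = if P k then 2 * d k else d k / 2) (hFanti : Antitone F)
    (hfail : ∀ k, ¬ P k → F k ≤ M * d k ^ 2) {j k : ℕ} (hj : ¬ P j) (hjk : j < k) :
    F k ≤ 4 * M * d k ^ 2 := by
  induction k, hjk using Nat.le_induction with
  | base =>
    rw [hd, if_neg hj]
    linarith [hFanti (Nat.le_succ j), hfail j hj]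
  | succ k _ ih =>
    rw [hd]
    split_ifs with hP
    · nlinarith [hFanti (Nat.le_succ k), mul_nonneg hM (sq_nonneg (d k))]
    · linarith [hFanti (Nat.le_succ k), hfail k hP]

lemma mul_pow_count_le {R : ℕ → Prop} [DecidablePred R] {q : ℝ} (hFanti : Antitone F)
    (hq : 0 ≤ q) (h : ∀ k, R k → q * F (k + 1) ≤ F k) (N : ℕ) :
    F N * q ^ Nat.count R N ≤ F 0 := by
  induction N with
  | zero => simp
  | succ N ih =>
    rw [Nat.count_succ]
    by_cases hR : R N
    · rw [if_pos hR, pow_succ]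
      nlinarith [mul_le_mul_of_nonneg_right (h N hR) (pow_nonneg hq (Nat.count R N))]
    · rw [if_neg hR, add_zero]
      nlinarith [mul_le_mul_of_nonneg_right (hFanti (Nat.le_succ N))
        (pow_nonneg hq (Nat.count R N))]

lemma mul_le_of_le_four_mul_sq {η M : ℝ} {k : ℕ} (hη : 0 ≤ η) (hM : 0 < M) (hFk : 0 ≤ F k)
    (hsucc : F (k + 1) ≤ F k - η * d k ^ 2) (hk : F k ≤ 4 * M * d k ^ 2) :
    (1 + η / (4 * M)) * F (k + 1) ≤ F k := by
  have ht : 0 ≤ η / (4 * M) := by positivity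
  have : η / (4 * M) * F k ≤ η * d k ^ 2 := by
    rw [div_mul_eq_mul_div, div_le_iff₀ (by positivity)]
    nlinarith
  have := mul_le_mul_of_nonneg_left
    (by linarith : F (k + 1) ≤ (1 - η / (4 * M)) * F k) (by linarith : 0 ≤ 1 + η / (4 * M))
  nlinarith [mul_nonneg (sq_nonneg (η / (4 * M))) hFk]

lemma nat_count_mul_log_le {R : ℕ → Prop} [DecidablePred R] {q c ε : ℝ} {N : ℕ}
    (hFanti : Antitone F) (hFN : 0 ≤ F N) (hq : 0 < q) (hR : ∀ k, R k → q * F (k + 1) ≤ F k)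
    (hε : 0 < ε) (hGN : ε ^ 2 < c * F N) :
    Nat.count R N * log q ≤ log (c * F 0) + 2 * log (1 / ε) := by
  have hc : 0 < c := pos_of_mul_pos_left ((pow_pos hε 2).trans hGN) hFN
  have hεN : ε ^ 2 * q ^ Nat.count R N ≤ c * F 0 := by
    have := mul_le_mul_of_nonneg_left (mul_pow_count_le hFanti hq.le hR N) hc.le
    nlinarith [mul_le_mul_of_nonneg_right hGN.le (by positivity : 0 ≤ q ^ Nat.count R N)]
  have := nat_mul_log_le_log_div (pow_pos hε 2) hq hεN
  rw [log_div ((by positivity : 0 < ε ^ 2 * q ^ Nat.count R N).trans_le hεN).ne'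
    (by positivity), log_pow] at this
  rw [one_div, log_inv]
  push_cast at this
  linarith

theorem exists_le_mul_one_add_log_of_stepSize {η M Λ c : ℝ} (hd_pos : ∀ k, 0 < d k)
    (hd : ∀ k, d (k + 1) = if P k then 2 * d k else d k / 2) (hF : ∀ k, 0 ≤ F k)
    (hFanti : Antitone F) (hG : ∀ k, G k ^ 2 ≤ c * F k) (hη : 0 < η) (hM : 0 < M)
    (hΛ : 0 < Λ) (hsucc : ∀ k, P k → F (k + 1) ≤ F k - η * d k ^ 2)
    (hfail : ∀ k, ¬ P k → G k ≤ Λ * d k ∧ F k ≤ M * d k ^ 2) :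
    ∃ C : ℝ, 0 < C ∧ ∀ ε : ℝ, 0 < ε → ε ≤ 1 →
      ∃ k : ℕ, (k : ℝ) ≤ C * (1 + log (1 / ε)) ∧ G k ≤ ε := by
  classical
  obtain ⟨N₀, hN₀⟩ := exists_forall_ge_exists_not hd_pos hd hF hFanti hη hsucc
  set q := 1 + η / (4 * M)
  have hκ : 0 < log q := log_pos (lt_add_of_pos_right 1 (by positivity))
  -- after the first unsuccessful iteration, every successful one contracts `F` by the factor `q`
  set R : ℕ → Prop := fun k => P k ∧ F k ≤ 4 * M * d k ^ 2
  have hR : ∀ k, R k → q * F (k + 1) ≤ F k := fun k ⟨hP, hk⟩ =>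
    mul_le_of_le_four_mul_sq hη.le hM (hF k) (hsucc k hP) hk
  have hPR : ∀ k, N₀ ≤ k → P k → R k := fun k hk hP => by
    obtain ⟨j, hjk, hj⟩ := hN₀ k hk
    exact ⟨hP, le_four_mul_sq_of_not_of_lt hM.le hd hFanti (fun k hk => (hfail k hk).2) hj hjk⟩
  set m₀ := min (d 0) (1 / (2 * Λ))
  set A := 2 * N₀ + 2 * (|log (c * F 0)| / log q) + |log (d 0 / m₀)| / log 2
  set B := 4 / log q + 1 / log 2
  refine ⟨A + B + 1, by positivity, fun ε hε hε1 => ?_⟩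
  refine exists_le_mul_one_add_of_forall_le (by positivity) (by positivity)
    (log_nonneg (by rw [le_div_iff₀ hε]; linarith)) fun N hN => ?_
  replace hN : ∀ k ≤ N, ε < G k := fun k hk => not_le.mp (hN k hk)
  have hsteps : N * log 2 ≤ 2 * Nat.count P N * log 2 + log (d 0 / m₀) + log (1 / ε) :=
    nat_mul_log_two_le_of_forall_lt hd_pos hd hΛ (fun k hk => (hfail k hk).1) hε hε1
      fun k hk => hN k hk.le
  have hgood : Nat.count R N * log q ≤ log (c * F 0) + 2 * log (1 / ε) :=
    nat_count_mul_log_le hFanti (hF N) (by positivity) hR hε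
      ((pow_lt_pow_left₀ (hN N le_rfl) hε.le two_ne_zero).trans_le (hG N))
  have hcount : (Nat.count P N : ℝ) ≤ N₀ + Nat.count R N := by
    exact_mod_cast Nat.count_le_add_count hPR N
  have hlog2 := log_pos one_lt_two
  have hNle : (N : ℝ) ≤ 2 * Nat.count P N + (|log (d 0 / m₀)| + log (1 / ε)) / log 2 := by
    rw [← sub_le_iff_le_add', le_div_iff₀ hlog2]
    linarith [le_abs_self (log (d 0 / m₀))]
  have hRle : (Nat.count R N : ℝ) ≤ (|log (c * F 0)| + 2 * log (1 / ε)) / log q := by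
    rw [le_div_iff₀ hκ]
    linarith [le_abs_self (log (c * F 0))]
  have hB : B * log (1 / ε) = 2 * (2 * log (1 / ε) / log q) + log (1 / ε) / log 2 := by
    ring
  simp only [A, add_div] at hNle hRle ⊢
  linarith

end StepSize

theorem optimist_complexity_strongly_convex_general {n : ℕ}
    (f : EuclideanSpace ℝ (Fin n) → ℝ)
    (hdiff : Differentiable ℝ f)
    (L : ℝ) (hL : 0 < L)
    (hlip : ∀ y z, ‖gradient f y - gradient f z‖ ≤ L * ‖y - z‖)
    (hbdd : BddBelow (Set.range f))
    (η ζ : ℝ) (hη : 0 < η) (hζ : 0 < ζ)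
    (x ghat : ℕ → EuclideanSpace ℝ (Fin n)) (δ : ℕ → ℝ) (hδ : ∀ k, 0 < δ k)
    (hmono : ∀ k, f (x (k + 1)) ≤ f (x k))
    (hsd : ∀ k, f (x (k + 1)) ≤
      max (f (x k) - η * δ k ^ 2) (f (x k - (δ k / ‖ghat k‖) • ghat k)))
    (hacc : ∀ k, ‖ghat k - gradient f (x k)‖ ≤ ζ * δ k)
    (hupd : ∀ k,
      ((η * δ k ≤ ‖ghat k‖ ∧ f (x (k + 1)) ≤ f (x k) - η * δ k ^ 2) → δ (k + 1) = 2 * δ k) ∧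
      (¬(η * δ k ≤ ‖ghat k‖ ∧ f (x (k + 1)) ≤ f (x k) - η * δ k ^ 2) → δ (k + 1) = δ k / 2))
    (σ : ℝ) (hσ : 0 < σ)
    (hstrong : ConvexOn ℝ Set.univ (fun y => f y - σ / 2 * ‖y‖ ^ 2)) :
    ∃ C : ℝ, 0 < C ∧ ∀ ε : ℝ, 0 < ε → ε ≤ 1 →
      ∃ k : ℕ, (k : ℝ) ≤ C * (1 + Real.log (1 / ε)) ∧ ‖gradient f (x k)‖ ≤ ε := by
  classical
  set P : ℕ → Prop := fun k => η * δ k ≤ ‖ghat k‖ ∧ f (x (k + 1)) ≤ f (x k) - η * δ k ^ 2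
  set Λ := η + 2 * ζ + L
  have hgrad : ∀ k, ¬ P k → ‖gradient f (x k)‖ ≤ Λ * δ k := fun k hk =>
    norm_gradient_le_of_not_sufficient_decrease hL.le hdiff hlip hη hζ.le (hδ k) (hsd k) (hacc k) hk
  refine exists_le_mul_one_add_log_of_stepSize (F := fun k => f (x k) - sInf (Set.range f))
    (P := P) (M := Λ ^ 2 / (2 * σ)) (Λ := Λ) (c := 4 * L) hδ
    (fun k => by split_ifs with h; exacts [(hupd k).1 h, (hupd k).2 h])
    (fun k => sub_nonneg.mpr (csInf_le hbdd ⟨x k, rfl⟩))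
    (antitone_nat_of_succ_le fun k => sub_le_sub_right (hmono k) _)
    (fun k => norm_gradient_sq_le_mul_sub_sInf hL hdiff hlip hbdd (x k)) hη (by positivity)
    (by positivity) (fun k hk => by linarith [hk.2]) (fun k hk => ⟨hgrad k hk, ?_⟩)
  calc f (x k) - sInf (Set.range f) ≤ ‖gradient f (x k)‖ ^ 2 / (2 * σ) :=
        sub_sInf_le_norm_gradient_sq_div hσ hdiff hstrong (x k)
    _ ≤ (Λ * δ k) ^ 2 / (2 * σ) := by gcongr; exact hgrad k hk
    _ = Λ ^ 2 / (2 * σ) * δ k ^ 2 := by ring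

/-- Worst-case complexity of the derivative-free OptimIST framework in the strongly convex case:
if `f` is `σ`-strongly convex, then there is a constant `C > 0` such that for every `ε ∈ (0, 1]`
some iterate `k ≤ C (1 + log (1/ε))` satisfies `‖∇f (x k)‖ ≤ ε`. -/
theorem optimist_complexity_strongly_convex {n : ℕ}
    (f : EuclideanSpace ℝ (Fin n) → ℝ)
    (hdiff : Differentiable ℝ f)
    (L : ℝ) (hL : 0 < L)
    (hlip : ∀ y z, ‖gradient f y - gradient f z‖ ≤ L * ‖y - z‖)
    (hbdd : BddBelow (Set.range f))
    (η ζ : ℝ) (hη : 0 < η) (hζ : 0 < ζ)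
    (x ghat : ℕ → EuclideanSpace ℝ (Fin n)) (δ : ℕ → ℝ) (hδ : ∀ k, 0 < δ k)
    (hmono : ∀ k, f (x (k + 1)) ≤ f (x k))
    (hsd : ∀ k, f (x (k + 1)) ≤
      max (f (x k) - η * δ k ^ 2) (f (x k - (δ k / ‖ghat k‖) • ghat k)))
    (hacc : ∀ k, ‖ghat k - gradient f (x k)‖ ≤ ζ * δ k)
    (hupd : ∀ k,
      ((η * δ k ≤ ‖ghat k‖ ∧ f (x (k + 1)) ≤ f (x k) - η * δ k ^ 2) → δ (k + 1) = 2 * δ k) ∧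
      (¬(η * δ k ≤ ‖ghat k‖ ∧ f (x (k + 1)) ≤ f (x k) - η * δ k ^ 2) → δ (k + 1) = δ k / 2))
    (σ : ℝ) (hσ : 0 < σ)
    (hstrong : ConvexOn ℝ Set.univ (fun y => f y - σ / 2 * ‖y‖ ^ 2))
    (hg0 : gradient f (x 0) ≠ 0) :
    ∃ C : ℝ, 0 < C ∧ ∀ ε : ℝ, 0 < ε → ε ≤ 1 →
      ∃ k : ℕ, (k : ℝ) ≤ C * (1 + Real.log (1 / ε)) ∧ ‖gradient f (x k)‖ ≤ ε :=
  optimist_complexity_strongly_convex_general f hdiff L hL hlip hbdd η ζ hη hζ x ghat δ hδ hmono hsd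
    hacc hupd σ hσ hstrong
end
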